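/- arXiv:0812.3232 — 7 statements merged into one kernel-verified Lean document; each statement's English description precedes it below -/
import Mathlib

section
/- Let Z be Gamma-distributed with shape N_r and rate 1, and Y be Gamma-distributed with shape N_t-1 and rate N_t/ρ, independent, where N_r, N_t ≥ 1, N_t ≥ 2, ρ > 0. Then for x > 0, P(Z/(Y+1) ≤ x) = 1 - e^{-x}/(1+(ρ/N_t)x)^{N_t-1} · Σ_{k=0}^{N_r-1} Σ_{p=0}^{k} [C(N_t+p-2, p) (ρ/N_t)^p / (k-p)!] · x^k / (1+(ρ/N_t)x)^p. -/
/-!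
Conditionally on `Y = y`, the event is `Z ≤ x (y + 1)`, whose probability is the Erlang
distribution function `1 - e^{-t} ∑_{k < N_r} t^k / k!` at `t = x (y + 1)`. Expanding `(y + 1)^k`
binomially reduces the expectation over `Y ~ Γ(a, λ)` to the moments `E[Y^p e^{-xY}]`, and
`y^p e^{-xy}` times the `Γ(a, λ)` density is a multiple of the `Γ(a + p, λ + x)` density, so
`E[Y^p e^{-xY}] = λ^a Γ(a + p) / (Γ(a) (λ + x)^{a + p})`.
-/

open MeasureTheory ProbabilityTheory Real Set Finset
open scoped Nat

/-- Equals the distribution function of `Γ(n, 1)` only for `t ≥ 0`. -/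
noncomputable def erlangCDF (n : ℕ) (t : ℝ) : ℝ :=
  1 - exp (-t) * ∑ k ∈ range n, t ^ k / k !

lemma erlangCDF_zero_right {n : ℕ} (hn : n ≠ 0) : erlangCDF n 0 = 0 := by
  obtain ⟨m, rfl⟩ := Nat.exists_eq_succ_of_ne_zero hn
  simp [erlangCDF, sum_range_succ']

lemma hasDerivAt_erlangCDF (n : ℕ) (t : ℝ) :
    HasDerivAt (erlangCDF (n + 1)) (t ^ n * exp (-t) / n !) t := by
  have hsum : HasDerivAt (fun s : ℝ ↦ ∑ k ∈ range (n + 1), s ^ k / k !)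
      (∑ k ∈ range n, t ^ k / k !) t := by
    refine (HasDerivAt.fun_sum (u := range (n + 1)) fun k _ ↦
      (hasDerivAt_pow k t).div_const (k ! : ℝ)).congr_deriv ?_
    rw [sum_range_succ']
    simp only [Nat.cast_zero, zero_mul, zero_div, add_zero, Nat.add_sub_cancel,
      Nat.factorial_succ, Nat.cast_mul]
    refine sum_congr rfl fun k _ ↦ ?_
    field_simp
  refine (((hasDerivAt_neg t).exp.mul hsum).const_sub 1).congr_deriv ?_
  rw [sum_range_succ]
  ring

lemma gammaPDFReal_natCast_succ (n : ℕ) (r : ℝ) {t : ℝ} (ht : 0 ≤ t) :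
    gammaPDFReal (n + 1 : ℕ) r t = r ^ (n + 1) * t ^ n * exp (-(r * t)) / n ! := by
  rw [gammaPDFReal, if_pos ht, Nat.cast_succ, Gamma_nat_eq_factorial, add_sub_cancel_right,
    ← Nat.cast_succ, rpow_natCast, rpow_natCast, Nat.succ_eq_add_one]
  ring

lemma cdf_gammaMeasure_natCast {n : ℕ} (hn : n ≠ 0) {r t : ℝ} (hr : 0 < r) (ht : 0 ≤ t) :
    cdf (gammaMeasure n r) t = erlangCDF n (r * t) := by
  obtain ⟨m, rfl⟩ := Nat.exists_eq_succ_of_ne_zero hn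
  have hderiv (s : ℝ) : HasDerivAt (fun s ↦ erlangCDF (m + 1) (r * s))
      (r ^ (m + 1) * s ^ m * exp (-(r * s)) / m !) s := by
    refine ((hasDerivAt_erlangCDF m (r * s)).comp s ((hasDerivAt_id s).const_mul r)).congr_deriv ?_
    simp only [mul_one]
    ring
  have hIic : ∫ s in Iic t, gammaPDFReal (m + 1 : ℕ) r s =
      ∫ s in Icc 0 t, gammaPDFReal (m + 1 : ℕ) r s :=
    setIntegral_eq_of_subset_of_forall_sdiff_eq_zero measurableSet_Iic Icc_subset_Iic_self
      fun s hs ↦ if_neg fun h ↦ hs.2 ⟨h, hs.1⟩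
  rw [cdf_gammaMeasure_eq_integral (by positivity) hr, hIic, integral_Icc_eq_integral_Ioc,
    ← intervalIntegral.integral_of_le ht,
    intervalIntegral.integral_congr fun s hs ↦ gammaPDFReal_natCast_succ m r (uIcc_of_le ht ▸ hs).1,
    intervalIntegral.integral_eq_sub_of_hasDerivAt (fun s _ ↦ hderiv s)
      (Continuous.intervalIntegrable (by fun_prop) _ _),
    mul_zero, erlangCDF_zero_right m.succ_ne_zero, sub_zero]

section GammaMeasure

variable {a r : ℝ}

lemma measurable_gammaPDF (a r : ℝ) : Measurable (gammaPDF a r) :=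
  (measurable_gammaPDFReal a r).ennreal_ofReal

lemma ae_nonneg_gammaMeasure (a r : ℝ) : ∀ᵐ y ∂gammaMeasure a r, 0 ≤ y := by
  rw [ae_iff, show {y : ℝ | ¬0 ≤ y} = Set.Iio 0 by ext; simp, gammaMeasure,
    withDensity_apply _ measurableSet_Iio]
  exact lintegral_gammaPDF_of_nonpos le_rfl

lemma integral_gammaMeasure (ha : 0 < a) (hr : 0 < r) (f : ℝ → ℝ) :
    ∫ y, f y ∂gammaMeasure a r = ∫ y, gammaPDFReal a r y * f y := by
  rw [gammaMeasure, integral_withDensity_eq_integral_toReal_smul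
    (measurable_gammaPDF a r) (ae_of_all _ fun _ ↦ ENNReal.ofReal_lt_top)]
  simp only [gammaPDF, ENNReal.toReal_ofReal (gammaPDFReal_nonneg ha hr _), smul_eq_mul]

lemma integrable_gammaMeasure_iff (ha : 0 < a) (hr : 0 < r) {f : ℝ → ℝ} :
    Integrable f (gammaMeasure a r) ↔ Integrable fun y ↦ gammaPDFReal a r y * f y := by
  rw [gammaMeasure, integrable_withDensity_iff_integrable_smul'
    (measurable_gammaPDF a r) (ae_of_all _ fun _ ↦ ENNReal.ofReal_lt_top)]
  simp only [gammaPDF, ENNReal.toReal_ofReal (gammaPDFReal_nonneg ha hr _), smul_eq_mul]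

lemma rpow_sub_one_mul_pow_eq {y : ℝ} (hy : 0 ≤ y) (ha : 0 < a) (p : ℕ) :
    y ^ (a - 1) * y ^ p = y ^ (a + p - 1) := by
  rcases p.eq_zero_or_pos with rfl | hp
  · simp
  · rw [add_sub_right_comm, rpow_add_natCast' hy]
    have : (1 : ℝ) ≤ p := by exact_mod_cast hp
    linarith

lemma gammaPDFReal_mul_pow_mul_exp (ha : 0 < a) {s : ℝ} (hrs : 0 < r + s) (p : ℕ) (y : ℝ) :
    gammaPDFReal a r y * (y ^ p * exp (-(s * y))) =
      r ^ a * Gamma (a + p) / (Gamma a * (r + s) ^ (a + p)) * gammaPDFReal (a + p) (r + s) y := by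
  by_cases hy : 0 ≤ y
  · have hΓ : Gamma (a + p) ≠ 0 := (Gamma_pos_of_pos (by positivity)).ne'
    have hrs' : (r + s) ^ (a + p) ≠ 0 := (rpow_pos_of_pos hrs _).ne'
    simp only [gammaPDFReal, if_pos hy]
    rw [← rpow_sub_one_mul_pow_eq hy ha p, show -((r + s) * y) = -(r * y) + -(s * y) by ring,
      exp_add]
    field_simp
  · simp [gammaPDFReal, hy]

lemma integrable_pow_mul_exp_gammaMeasure (ha : 0 < a) (hr : 0 < r) {s : ℝ} (hrs : 0 < r + s)
    (p : ℕ) : Integrable (fun y ↦ y ^ p * exp (-(s * y))) (gammaMeasure a r) := by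
  have := isProbabilityMeasure_gammaMeasure (a := a + p) (by positivity) hrs
  have h := (integrable_gammaMeasure_iff (a := a + p) (by positivity) hrs).1 (integrable_const 1)
  simp only [mul_one] at h
  rw [integrable_gammaMeasure_iff ha hr]
  simpa only [gammaPDFReal_mul_pow_mul_exp ha hrs] using h.const_mul _

lemma integral_pow_mul_exp_gammaMeasure (ha : 0 < a) (hr : 0 < r) {s : ℝ} (hrs : 0 < r + s)
    (p : ℕ) : ∫ y, y ^ p * exp (-(s * y)) ∂gammaMeasure a r =
      r ^ a * Gamma (a + p) / (Gamma a * (r + s) ^ (a + p)) := by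
  have := isProbabilityMeasure_gammaMeasure (a := a + p) (by positivity) hrs
  have h := integral_gammaMeasure (a := a + p) (by positivity) hrs fun _ ↦ 1
  simp only [integral_const, probReal_univ, smul_eq_mul, mul_one] at h
  simp only [integral_gammaMeasure ha hr, gammaPDFReal_mul_pow_mul_exp ha hrs, integral_const_mul,
    ← h, mul_one]

end GammaMeasure

lemma erlangCDF_mul_add_one (n : ℕ) (x y : ℝ) :
    erlangCDF n (x * (y + 1)) = 1 - ∑ k ∈ range n, ∑ p ∈ range (k + 1),
      exp (-x) * x ^ k * k.choose p / k ! * (y ^ p * exp (-(x * y))) := by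
  rw [erlangCDF, mul_sum]
  congr 1
  refine sum_congr rfl fun k _ ↦ ?_
  rw [mul_pow, add_pow, mul_sum, sum_div, mul_sum]
  refine sum_congr rfl fun p _ ↦ ?_
  rw [show -(x * (y + 1)) = -x + -(x * y) by ring, exp_add, one_pow, mul_one]
  ring

lemma integral_erlangCDF_mul_add_one_gammaMeasure (n : ℕ) {a r x : ℝ} (ha : 0 < a) (hr : 0 < r)
    (hx : 0 ≤ x) : ∫ y, erlangCDF n (x * (y + 1)) ∂gammaMeasure a r =
      1 - ∑ k ∈ range n, ∑ p ∈ range (k + 1), exp (-x) * x ^ k * k.choose p / k ! *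
        (r ^ a * Gamma (a + p) / (Gamma a * (r + x) ^ (a + p))) := by
  have := isProbabilityMeasure_gammaMeasure ha hr
  have hrx : 0 < r + x := by linarith
  have hint (k p : ℕ) := (integrable_pow_mul_exp_gammaMeasure ha hr hrx p).const_mul
    (exp (-x) * x ^ k * k.choose p / k !)
  simp only [erlangCDF_mul_add_one]
  rw [integral_sub (integrable_const 1) (integrable_finsetSum _ fun k _ ↦
      integrable_finsetSum _ fun p _ ↦ hint k p), integral_const, probReal_univ, one_smul,
    integral_finsetSum _ fun k _ ↦ integrable_finsetSum _ fun p _ ↦ hint k p]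
  simp only [integral_finsetSum _ fun p _ ↦ hint _ p, integral_const_mul,
    integral_pow_mul_exp_gammaMeasure ha hr hrx]

lemma ProbabilityTheory.IndepFun.measure_preimage_eq_lintegral {Ω α β : Type*} [MeasurableSpace Ω]
    [MeasurableSpace α] [MeasurableSpace β] {μ : Measure Ω} [IsFiniteMeasure μ]
    {Z : Ω → α} {Y : Ω → β} (hZ : AEMeasurable Z μ) (hY : AEMeasurable Y μ) (hZY : IndepFun Z Y μ)
    {s : Set (α × β)} (hs : MeasurableSet s) :
    μ ((fun ω ↦ (Z ω, Y ω)) ⁻¹' s) = ∫⁻ y, μ.map Z ((fun z ↦ (z, y)) ⁻¹' s) ∂μ.map Y := by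
  rw [← Measure.map_apply_of_aemeasurable (hZ.prodMk hY) hs,
    (indepFun_iff_map_prod_eq_prod_map_map hZ hY).1 hZY, Measure.prod_apply_symm hs]

lemma ProbabilityTheory.IndepFun.toReal_measure_div_add_one_le {Ω : Type*} [MeasurableSpace Ω]
    {μ : Measure Ω} [IsProbabilityMeasure μ] {Z Y : Ω → ℝ} (hZ : AEMeasurable Z μ)
    (hY : AEMeasurable Y μ) (hZY : IndepFun Z Y μ) (hY_gt : ∀ᵐ y ∂μ.map Y, -1 < y) (x : ℝ) :
    (μ {ω | Z ω / (Y ω + 1) ≤ x}).toReal = ∫ y, cdf (μ.map Z) (x * (y + 1)) ∂μ.map Y := by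
  have := Measure.isProbabilityMeasure_map (μ := μ) hZ
  have hs : MeasurableSet {q : ℝ × ℝ | q.1 / (q.2 + 1) ≤ x} := by measurability
  rw [show {ω | Z ω / (Y ω + 1) ≤ x} = (fun ω ↦ (Z ω, Y ω)) ⁻¹' {q | q.1 / (q.2 + 1) ≤ x} from rfl,
    hZY.measure_preimage_eq_lintegral hZ hY hs,
    ← integral_toReal (measurable_measure_prodMk_right hs).aemeasurable
      (ae_of_all _ fun _ ↦ measure_lt_top _ _)]
  refine integral_congr_ae (hY_gt.mono fun y hy ↦ ?_)
  have hIic : (fun z ↦ (z, y)) ⁻¹' {q : ℝ × ℝ | q.1 / (q.2 + 1) ≤ x} = Iic (x * (y + 1)) := by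
    ext z
    simp [div_le_iff₀ (show 0 < y + 1 by linarith)]
  simp only [hIic, cdf_eq_real, measureReal_def]

lemma Nat.choose_mul_add_factorial_mul_sub_factorial {k p : ℕ} (hpk : p ≤ k) (m : ℕ) :
    k.choose p * (m + p)! * (k - p)! = (m + p).choose p * k ! * m ! := by
  have hk := Nat.choose_mul_factorial_mul_factorial hpk
  have hmp := Nat.choose_mul_factorial_mul_factorial (Nat.le_add_left p m)
  rw [Nat.add_sub_cancel] at hmp
  refine Nat.eq_of_mul_eq_mul_right p.factorial_pos ?_
  calc _ = k.choose p * p ! * (k - p)! * (m + p)! := by ring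
    _ = (m + p).choose p * p ! * m ! * k ! := by rw [hk, hmp, mul_comm]
    _ = _ := by ring

lemma binomial_term_mul_gamma_moment {k p : ℕ} (hpk : p ≤ k) (m : ℕ) (c : ℝ) {r x : ℝ}
    (hr : 0 < r) (hx : 0 ≤ x) :
    c * x ^ k * k.choose p / k ! *
        (r ^ ((m + 1 : ℕ) : ℝ) * Gamma ((m + 1 : ℕ) + p) /
          (Gamma (m + 1 : ℕ) * (r + x) ^ ((m + 1 : ℕ) + (p : ℝ)))) =
      c / ((r + x) / r) ^ (m + 1) *
        ((m + p).choose p * (1 / r) ^ p / (k - p)! * x ^ k / ((r + x) / r) ^ p) := by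
  have hcomb : (k.choose p : ℝ) * (m + p)! * (k - p)! = (m + p).choose p * k ! * m ! := by
    exact_mod_cast Nat.choose_mul_add_factorial_mul_sub_factorial hpk m
  rw [← Nat.cast_add, rpow_natCast, rpow_natCast, Nat.add_right_comm, Nat.cast_succ (m + p),
    Gamma_nat_eq_factorial, Nat.cast_succ m, Gamma_nat_eq_factorial]
  have hrx : r + x ≠ 0 := by positivity
  simp only [div_pow, one_pow]
  field_simp
  linear_combination c * x ^ k * (r + x) ^ (m + p + 1) * hcomb

theorem stmt0 {Ω : Type*} [MeasurableSpace Ω] (μ : Measure Ω) [IsProbabilityMeasure μ]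
    (Nr Nt : ℕ) (hNr : 1 ≤ Nr) (hNt : 2 ≤ Nt) (ρ : ℝ) (hρ : 0 < ρ)
    (Z Y : Ω → ℝ) (hZY : IndepFun Z Y μ)
    (hZ : μ.map Z = gammaMeasure Nr 1)
    (hY : μ.map Y = gammaMeasure ((Nt : ℝ) - 1) (Nt / ρ))
    (x : ℝ) (hx : 0 < x) :
    (μ {ω | Z ω / (Y ω + 1) ≤ x}).toReal =
      1 - Real.exp (-x) / (1 + ρ / Nt * x) ^ (Nt - 1) *
        ∑ k ∈ Finset.range Nr, ∑ p ∈ Finset.range (k + 1),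
          (((Nt + p - 2).choose p : ℝ) * (ρ / Nt) ^ p / (Nat.factorial (k - p))) *
            x ^ k / (1 + ρ / Nt * x) ^ p := by
  obtain ⟨m, rfl⟩ : ∃ m, Nt = m + 2 := ⟨Nt - 2, by omega⟩
  set r : ℝ := (m + 2 : ℕ) / ρ with hr_def
  have hr : 0 < r := by positivity
  rw [show ((m + 2 : ℕ) : ℝ) - 1 = (m + 1 : ℕ) by push_cast; ring] at hY
  have := isProbabilityMeasure_gammaMeasure (a := Nr) (by positivity) one_pos
  have := isProbabilityMeasure_gammaMeasure (a := (m + 1 : ℕ)) (by positivity) hr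
  have hZm : AEMeasurable Z μ := .of_map_ne_zero (hZ ▸ IsProbabilityMeasure.ne_zero _)
  have hYm : AEMeasurable Y μ := .of_map_ne_zero (hY ▸ IsProbabilityMeasure.ne_zero _)
  have hY_nonneg : ∀ᵐ y ∂μ.map Y, 0 ≤ y := hY ▸ ae_nonneg_gammaMeasure _ _
  rw [hZY.toReal_measure_div_add_one_le hZm hYm (hY_nonneg.mono fun y hy ↦ by linarith) x]
  calc ∫ y, cdf (μ.map Z) (x * (y + 1)) ∂μ.map Y
      = ∫ y, erlangCDF Nr (x * (y + 1)) ∂gammaMeasure (m + 1 : ℕ) r := by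
        rw [← hY]
        refine integral_congr_ae (hY_nonneg.mono fun y hy ↦ ?_)
        dsimp only
        rw [hZ, cdf_gammaMeasure_natCast (by omega) one_pos (by positivity), one_mul]
    _ = _ := integral_erlangCDF_mul_add_one_gammaMeasure Nr (by positivity) hr hx.le
    _ = _ := by
        have hrx : (r + x) / r = 1 + ρ / (m + 2 : ℕ) * x := by rw [hr_def]; field_simp
        rw [mul_sum]
        refine congrArg _ (sum_congr rfl fun k _ ↦ ?_)
        rw [mul_sum]
        refine sum_congr rfl fun p hp ↦ ?_
        rw [binomial_term_mul_gamma_moment (Nat.lt_succ_iff.mp (mem_range.mp hp)) m _ hr hx.le,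
          hrx, hr_def, one_div_div, show m + 2 + p - 2 = m + p by omega,
          show m + 2 - 1 = m + 1 by omega]
end

section
/- Combinatorial identity from the high-SNR MMSE analysis: for integers N_t > N_r ≥ 1, N_t Σ_{k=0}^{N_r-1} C(N_t-1, k) Σ_{q=0}^{k} C(k,q) (-1)^{k-q}/(N_t - q - 1) = Σ_{k=1}^{N_r} 1/(1 - k/N_t) = Σ_{k=0}^{N_r-1} N_t/(N_t - k - 1). -/
/-!
The inner sum is the `k`-th forward difference of `y ↦ 1 / (N_t - 1 - y)` at `0`. Iterating
`1 / (z - 1) - 1 / z = 1 / (z (z - 1))` gives `Δᵏ (1 / (c - y)) = k! / ((c - y)(c - y - 1)⋯(c - y - k))`,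
so the inner sum is `k!` divided by the falling factorial `(N_t - 1)(N_t - 2)⋯(N_t - 1 - k)`.
As `C(N_t - 1, k) k! = (N_t - 1)⋯(N_t - k)`, the `k`-th summand collapses to `N_t / (N_t - 1 - k)`.
-/

open Finset Polynomial fwdDiff Nat

theorem descPochhammer_succ_eval_left {R : Type*} [CommRing R] (n : ℕ) (z : R) :
    (descPochhammer R (n + 1)).eval z = z * (descPochhammer R n).eval (z - 1) := by
  simp [descPochhammer_succ_left, eval_comp]

section

variable {K : Type*} [Field K]

theorem fwdDiff_iter_inv_sub (c : K) (n : ℕ) {y : K}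
    (hy : (descPochhammer K (n + 1)).eval (c - y) ≠ 0) :
    (Δ_[1])^[n] (fun x ↦ (c - x)⁻¹) y = n ! / (descPochhammer K (n + 1)).eval (c - y) := by
  induction n generalizing y with
  | zero => simp
  | succ n ih =>
    set z := c - y
    have hleft := descPochhammer_succ_eval_left (n + 1) z
    have hright := descPochhammer_succ_eval (n + 1) z
    have hz1 : (descPochhammer K (n + 1)).eval (z - 1) ≠ 0 := right_ne_zero_of_mul (hleft ▸ hy)
    have hz0 : (descPochhammer K (n + 1)).eval z ≠ 0 := left_ne_zero_of_mul (hright ▸ hy)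
    rw [Function.iterate_succ_apply', fwdDiff, ih (by rwa [sub_add_eq_sub_sub]), ih hz0,
      sub_add_eq_sub_sub, div_sub_div _ _ hz1 hz0, div_eq_div_iff (mul_ne_zero hz1 hz0) hy]
    push_cast [factorial_succ] at hright ⊢
    linear_combination (n ! : K) * ((descPochhammer K (n + 1)).eval z * hleft
      - (descPochhammer K (n + 1)).eval (z - 1) * hright)

variable [CharZero K]

theorem sum_choose_mul_neg_one_pow_div_sub {n k : ℕ} (hk : k < n) :
    ∑ q ∈ range (k + 1), (k.choose q : K) * (-1) ^ (k - q) / ((n : K) - q) =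
      k ! / n.descFactorial (k + 1) := by
  have hpos : n.descFactorial (k + 1) ≠ 0 := (descFactorial_pos.mpr hk).ne'
  have h := fwdDiff_iter_inv_sub (n : K) k (y := 0)
    (by rw [sub_zero, descPochhammer_eval_eq_descFactorial]; exact_mod_cast hpos)
  rw [fwdDiff_iter_eq_sum_shift] at h
  simp only [sub_zero, descPochhammer_eval_eq_descFactorial] at h
  rw [← h]
  refine sum_congr rfl fun q _ ↦ ?_
  simp [div_eq_mul_inv, mul_comm]

theorem choose_mul_sum_choose_mul_neg_one_pow_div_sub {n k : ℕ} (hk : k < n) :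
    (n.choose k : K) * ∑ q ∈ range (k + 1), (k.choose q : K) * (-1) ^ (k - q) / ((n : K) - q) =
      ((n : K) - k)⁻¹ := by
  have hchoose : (n.choose k : K) ≠ 0 := by exact_mod_cast (choose_pos hk.le).ne'
  have hfact : (k ! : K) ≠ 0 := by exact_mod_cast factorial_ne_zero k
  have hnk : (n : K) - k ≠ 0 := by
    rw [← cast_sub hk.le]; exact_mod_cast (Nat.sub_pos_of_lt hk).ne'
  rw [sum_choose_mul_neg_one_pow_div_sub hk, descFactorial_succ, cast_mul, cast_sub hk.le,
    descFactorial_eq_factorial_mul_choose, cast_mul]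
  field_simp

end

theorem sum_Icc_one_div_one_sub_div {K : Type*} [Field K] {x : K} (hx : x ≠ 0) (N : ℕ) :
    ∑ k ∈ Icc 1 N, 1 / (1 - (k : K) / x) = ∑ k ∈ range N, x / (x - k - 1) := by
  rw [range_eq_Ico, ← Ico_add_one_right_eq_Icc, ← sum_Ico_add' _ 0 N 1]
  refine sum_congr rfl fun k _ ↦ ?_
  rw [one_sub_div hx, one_div_div]
  push_cast
  ring

theorem stmt8_general (Nr Nt : ℕ) (hNt : Nr < Nt) :
    ((Nt : ℝ) * ∑ k ∈ Finset.range Nr, ((Nt - 1).choose k : ℝ) *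
        ∑ q ∈ Finset.range (k + 1),
          (k.choose q : ℝ) * (-1 : ℝ) ^ (k - q) / ((Nt : ℝ) - q - 1) =
      ∑ k ∈ Finset.Icc 1 Nr, 1 / (1 - (k : ℝ) / Nt)) ∧
    (∑ k ∈ Finset.Icc 1 Nr, 1 / (1 - (k : ℝ) / Nt) =
      ∑ k ∈ Finset.range Nr, (Nt : ℝ) / ((Nt : ℝ) - k - 1)) := by
  have hrhs := sum_Icc_one_div_one_sub_div (Nat.cast_ne_zero.mpr (by omega) : (Nt : ℝ) ≠ 0) Nr
  refine ⟨?_, hrhs⟩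
  obtain ⟨n, rfl⟩ : ∃ n, Nt = n + 1 := ⟨Nt - 1, by omega⟩
  rw [hrhs, mul_sum]
  refine sum_congr rfl fun k hk ↦ ?_
  have hkn : k < n := by rw [mem_range] at hk; omega
  have hshift : ∀ q : ℕ, (n : ℝ) + 1 - q - 1 = n - q := fun q ↦ by ring
  push_cast
  simp only [hshift]
  rw [choose_mul_sum_choose_mul_neg_one_pow_div_sub hkn, div_eq_mul_inv]

theorem stmt8 (Nr Nt : ℕ) (hNr : 1 ≤ Nr) (hNt : Nr < Nt) :
    ((Nt : ℝ) * ∑ k ∈ Finset.range Nr, ((Nt - 1).choose k : ℝ) *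
        ∑ q ∈ Finset.range (k + 1),
          (k.choose q : ℝ) * (-1 : ℝ) ^ (k - q) / ((Nt : ℝ) - q - 1) =
      ∑ k ∈ Finset.Icc 1 Nr, 1 / (1 - (k : ℝ) / Nt)) ∧
    (∑ k ∈ Finset.Icc 1 Nr, 1 / (1 - (k : ℝ) / Nt) =
      ∑ k ∈ Finset.range Nr, (Nt : ℝ) / ((Nt : ℝ) - k - 1)) :=
  stmt8_general Nr Nt hNt
end

section
/- As x → ∞, the MRC tail satisfies 1 - F_MRC(x) = (N_t/ρ)^{N_t-1}/(N_r-1)! · e^{-x} x^{N_r-N_t} (1 + O(1/x)), where F_MRC(x) = 1 - e^{-x}(1+(ρ/N_t)x)^{1-N_t} Σ_{k=0}^{N_r-1} Σ_{p=0}^{k} α_{p,k} x^k (1+(ρ/N_t)x)^{-p} with α_{p,k} = C(N_t+p-2,p)(ρ/N_t)^p/(k-p)!. -/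
open Real Filter Topology Finset

/-!
After multiplying by `exp x * x ^ (Nt - Nr)`, the tail becomes a finite sum of terms
`α p k * x ^ (m - d) / (1 + c x) ^ m` with `c = ρ / Nt`, `m = Nt - 1 + p` and
`d = (Nr - 1 - k) + p`. Since `x / (1 + c x) → c⁻¹`, such a term tends to `α p k * c⁻¹ ^ m` when
`d = 0` and to `0` otherwise; only `k = Nr - 1`, `p = 0` has `d = 0`, and
`α 0 (Nr - 1) = 1 / (Nr - 1)!`.
-/

lemma tendsto_div_one_add_mul_atTop {c : ℝ} (hc : 0 < c) :
    Tendsto (fun x : ℝ => x / (1 + c * x)) atTop (𝓝 c⁻¹) := by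
  have h : Tendsto (fun x : ℝ => (x⁻¹ + c)⁻¹) atTop (𝓝 c⁻¹) := by
    simpa using (tendsto_inv_atTop_zero.add_const c).inv₀ (by simpa using hc.ne')
  refine h.congr' ?_
  filter_upwards [eventually_gt_atTop 0] with x hx
  field_simp

lemma tendsto_rpow_sub_div_one_add_mul_pow {c : ℝ} (hc : 0 < c) (m d : ℕ) :
    Tendsto (fun x : ℝ => x ^ ((m : ℝ) - d) / (1 + c * x) ^ m) atTop
      (𝓝 (if d = 0 then c⁻¹ ^ m else 0)) := by
  have hneg : Tendsto (fun x : ℝ => x ^ (-(d : ℝ))) atTop (𝓝 (if d = 0 then 1 else 0)) := by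
    rcases Nat.eq_zero_or_pos d with rfl | hd
    · simp
    · simpa [hd.ne'] using tendsto_rpow_neg_atTop (by exact_mod_cast hd : (0 : ℝ) < d)
  have h := hneg.mul ((tendsto_div_one_add_mul_atTop hc).pow m)
  rw [ite_mul, one_mul, zero_mul] at h
  refine h.congr' ?_
  filter_upwards [eventually_gt_atTop 0] with x hx
  rw [div_pow, ← Real.rpow_natCast x m, mul_div_assoc', ← Real.rpow_add hx, neg_add_eq_sub]

lemma exp_mul_rpow_mul_tail_eq_sum (Nr Nt : ℕ) (hNr : 1 ≤ Nr) (hNt : 1 ≤ Nt)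
    (c : ℝ) (α : ℕ → ℕ → ℝ) {x : ℝ} (hx : 0 < x) :
    exp x * x ^ ((Nt : ℝ) - Nr) * (exp (-x) / (1 + c * x) ^ (Nt - 1) *
      ∑ k ∈ range Nr, ∑ p ∈ range (k + 1), α p k * x ^ k / (1 + c * x) ^ p) =
    ∑ k ∈ range Nr, ∑ p ∈ range (k + 1),
      α p k * (x ^ (((Nt - 1 + p : ℕ) : ℝ) - (Nr - 1 - k + p : ℕ)) / (1 + c * x) ^ (Nt - 1 + p)) := by
  rw [mul_sum, mul_sum]
  refine sum_congr rfl fun k hk => ?_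
  rw [mul_sum, mul_sum]
  refine sum_congr rfl fun p _ => ?_
  have hexponent : (((Nt - 1 + p : ℕ) : ℝ) - (Nr - 1 - k + p : ℕ)) = ((Nt : ℝ) - Nr) + k := by
    have hk : k ≤ Nr - 1 := Nat.le_pred_of_lt (mem_range.mp hk)
    push_cast [Nat.cast_sub hNt, Nat.cast_sub hk, Nat.cast_sub hNr]
    ring
  rw [hexponent, Real.rpow_add hx, Real.rpow_natCast, pow_add, Real.exp_neg]
  field_simp

lemma sum_range_sum_range_ite_eq (n : ℕ) (hn : 1 ≤ n) (f : ℕ → ℕ → ℝ) :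
    ∑ k ∈ range n, ∑ p ∈ range (k + 1), (if n - 1 - k + p = 0 then f p k else 0) = f 0 (n - 1) := by
  rw [sum_eq_single (n - 1), sum_eq_single 0]
  · simp
  · intro p _ hp
    simp [hp]
  · simp
  · intro k hk hk'
    refine sum_eq_zero fun p _ => if_neg ?_
    have := mem_range.mp hk
    omega
  · simp
    omega

theorem stmt15 (Nr Nt : ℕ) (hNr : 1 ≤ Nr) (hNt : 2 ≤ Nt) (ρ : ℝ) (hρ : 0 < ρ)
    (α : ℕ → ℕ → ℝ)
    (hα : ∀ p k, α p k = ((Nt + p - 2).choose p : ℝ) * (ρ / Nt) ^ p /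
      (Nat.factorial (k - p)))
    (F : ℝ → ℝ)
    (hF : ∀ x : ℝ, F x = 1 - Real.exp (-x) / (1 + ρ / Nt * x) ^ (Nt - 1) *
      ∑ k ∈ Finset.range Nr, ∑ p ∈ Finset.range (k + 1),
        α p k * x ^ k / (1 + ρ / Nt * x) ^ p) :
    Tendsto (fun x : ℝ => Real.exp x * x ^ ((Nt : ℝ) - Nr) * (1 - F x)) atTop
      (nhds (((Nt : ℝ) / ρ) ^ (Nt - 1) / (Nat.factorial (Nr - 1)))) := by
  have hc : 0 < ρ / Nt := div_pos hρ (Nat.cast_pos.mpr (by omega))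
  have hterms := tendsto_finsetSum (range Nr) fun k _ => tendsto_finsetSum (range (k + 1))
    fun p _ => (tendsto_rpow_sub_div_one_add_mul_pow hc (Nt - 1 + p) (Nr - 1 - k + p)).const_mul
      (α p k)
  simp only [mul_ite, mul_zero] at hterms
  rw [sum_range_sum_range_ite_eq Nr hNr, hα, inv_div] at hterms
  convert hterms.congr' ?_ using 2
  · simp [div_eq_inv_mul]
  · filter_upwards [eventually_gt_atTop 0] with x hx
    rw [hF, sub_sub_cancel, exp_mul_rpow_mul_tail_eq_sum Nr Nt hNr (by omega) _ α hx]
end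

section
/- As x → ∞, the MMSE tail satisfies 1 - F_MMSE(x) = α_MMSE · e^{-x} x^{N_r-N_t}(1+O(1/x)), where α_MMSE = Σ_{p=max(0,N_r-N_t)}^{N_r-1} C(N_t-1, N_r-1-p)(ρ/N_t)^{N_r-N_t-p}/p!, and F_MMSE(x) = 1 - e^{-x}(1+(ρ/N_t)x)^{1-N_t} Σ_{k=0}^{N_r-1} β_k x^k with β_k = (ρ/N_t)^k Σ_{p=max(0,k-N_t+1)}^{k} C(N_t-1,k-p)/(p!(ρ/N_t)^p). -/
open Real Filter

theorem stmt16 (Nr Nt : ℕ) (hNr : 1 ≤ Nr) (hNt : 1 ≤ Nt) (ρ : ℝ) (hρ : 0 < ρ)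
    (β : ℕ → ℝ)
    (hβ : ∀ k, β k = (ρ / Nt) ^ k *
      ∑ p ∈ Finset.Icc (k + 1 - Nt) k,
        ((Nt - 1).choose (k - p) : ℝ) / (Nat.factorial p * (ρ / Nt) ^ p))
    (F : ℝ → ℝ)
    (hF : ∀ x : ℝ, F x = 1 - Real.exp (-x) / (1 + ρ / Nt * x) ^ (Nt - 1) *
      ∑ k ∈ Finset.range Nr, β k * x ^ k)
    (a : ℝ)
    (ha : a = ∑ p ∈ Finset.Icc (Nr - Nt) (Nr - 1),
      ((Nt - 1).choose (Nr - 1 - p) : ℝ) * (ρ / Nt) ^ ((Nr : ℝ) - Nt - p) /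
        (Nat.factorial p)) :
    Tendsto (fun x : ℝ => Real.exp x * x ^ ((Nt : ℝ) - Nr) * (1 - F x)) atTop
      (nhds a) := by
  have hNt0 : (0:ℝ) < (Nt:ℝ) := by exact_mod_cast hNt
  set c : ℝ := ρ / Nt with hcdef
  have hc0 : 0 < c := div_pos hρ hNt0
  have hcne : c ≠ 0 := ne_of_gt hc0
  clear_value c
  -- ratio limit
  have hratio : Tendsto (fun x : ℝ => x / (1 + c * x)) atTop (nhds c⁻¹) := by
    have h1 : Tendsto (fun x : ℝ => x⁻¹ + c) atTop (nhds (0 + c)) :=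
      tendsto_inv_atTop_zero.add tendsto_const_nhds
    have h2 : Tendsto (fun x : ℝ => (x⁻¹ + c)⁻¹) atTop (nhds (0 + c)⁻¹) :=
      h1.inv₀ (by simpa using hcne)
    rw [zero_add] at h2
    refine h2.congr' ?_
    filter_upwards [eventually_gt_atTop (0:ℝ)] with x hx
    have hxne : x ≠ 0 := ne_of_gt hx
    have hdne : (1:ℝ) + c * x ≠ 0 := by positivity
    field_simp
  have hpow : Tendsto (fun x : ℝ => (x / (1 + c * x)) ^ (Nt - 1)) atTop
      (nhds (c⁻¹ ^ (Nt - 1))) := hratio.pow _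
  -- each term
  have hterm : ∀ k ∈ Finset.range Nr,
      Tendsto (fun x : ℝ => β k * x ^ ((k:ℝ) - ((Nr:ℝ) - 1)) * (x / (1 + c * x)) ^ (Nt - 1))
        atTop (nhds (β k * (if k = Nr - 1 then (1:ℝ) else 0) * c⁻¹ ^ (Nt - 1))) := by
    intro k hk
    rw [Finset.mem_range] at hk
    rcases eq_or_lt_of_le (Nat.le_sub_one_of_lt hk) with hke | hklt
    · have hx : Tendsto (fun x : ℝ => x ^ ((k:ℝ) - ((Nr:ℝ) - 1))) atTop (nhds 1) := by
        have : ((k:ℝ) - ((Nr:ℝ) - 1)) = 0 := by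
          have : (k:ℝ) = (Nr:ℝ) - 1 := by
            rw [hke]; push_cast [Nat.cast_sub hNr]; ring
          rw [this]; ring
        simpa [this, Real.rpow_zero] using (tendsto_const_nhds : Tendsto (fun _ : ℝ => (1:ℝ)) atTop (nhds 1))
      simpa [hke] using ((tendsto_const_nhds.mul hx).mul hpow)
    · have hx : Tendsto (fun x : ℝ => x ^ ((k:ℝ) - ((Nr:ℝ) - 1))) atTop (nhds 0) := by
        have hneg : ((k:ℝ) - ((Nr:ℝ) - 1)) = -(((Nr:ℝ) - 1) - k) := by ring
        have hpos : (0:ℝ) < ((Nr:ℝ) - 1) - k := by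
          have : (k:ℝ) < (Nr:ℝ) - 1 := by
            have h2 : k < Nr - 1 := hklt
            have := (Nat.cast_lt (α := ℝ)).2 h2
            rwa [Nat.cast_sub hNr, Nat.cast_one] at this
          linarith
        rw [hneg]
        exact tendsto_rpow_neg_atTop hpos
      have hkne : k ≠ Nr - 1 := ne_of_lt hklt
      simpa [hkne] using ((tendsto_const_nhds.mul hx).mul hpow)
  have hsum := tendsto_finset_sum (Finset.range Nr) hterm
  -- identify the limit value with a
  have hval : (∑ k ∈ Finset.range Nr,
      β k * (if k = Nr - 1 then (1:ℝ) else 0) * c⁻¹ ^ (Nt - 1)) = a := by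
    rw [Finset.sum_eq_single (Nr - 1)]
    · rw [if_pos rfl, mul_one, hβ, ha]
      have hset : Nr - 1 + 1 - Nt = Nr - Nt := by omega
      rw [hset, mul_comm (c ^ (Nr - 1)), Finset.sum_mul, Finset.sum_mul]
      refine Finset.sum_congr rfl fun p hp => ?_
      have hrp : c ^ ((Nr:ℝ) - Nt - p) = c ^ (Nr - 1) * c⁻¹ ^ (Nt - 1) / c ^ p := by
        have he : ((Nr:ℝ) - Nt - p) = ((Nr - 1 : ℕ):ℝ) - ((Nt - 1 : ℕ):ℝ) - (p:ℝ) := by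
          push_cast [Nat.cast_sub hNr, Nat.cast_sub hNt]; ring
        rw [he, Real.rpow_sub hc0, Real.rpow_sub hc0,
          Real.rpow_natCast, Real.rpow_natCast, Real.rpow_natCast,
          inv_pow]
        ring
      rw [hrp]
      have hfac : (Nat.factorial p : ℝ) ≠ 0 := Nat.cast_ne_zero.2 (Nat.factorial_ne_zero p)
      have hcp : c ^ p ≠ 0 := pow_ne_zero _ hcne
      rw [div_eq_mul_inv, mul_inv]
      ring
    · intro k _ hkne
      simp [hkne]
    · intro h
      exact absurd (Finset.mem_range.2 (Nat.sub_lt hNr one_pos)) h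
  rw [hval] at hsum
  refine hsum.congr' ?_
  filter_upwards [eventually_gt_atTop (0:ℝ)] with x hx
  have hx1 : (0:ℝ) < 1 + c * x := by positivity
  rw [hF, sub_sub_cancel, Finset.mul_sum, Finset.mul_sum]
  refine Finset.sum_congr rfl fun k hk => ?_
  have hxk : x ^ ((Nt:ℝ) - Nr) * x ^ k =
      x ^ ((k:ℝ) - ((Nr:ℝ) - 1)) * x ^ (Nt - 1) := by
    rw [← Real.rpow_natCast x k, ← Real.rpow_natCast x (Nt - 1),
      ← Real.rpow_add hx, ← Real.rpow_add hx]
    congr 1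
    push_cast [Nat.cast_sub hNt]
    ring
  have hexp : Real.exp x * Real.exp (-x) = 1 := by
    rw [← Real.exp_add]; simp
  rw [div_pow]
  have hstep : Real.exp x * x ^ ((Nt:ℝ) - (Nr:ℝ)) *
      (Real.exp (-x) / (1 + c * x) ^ (Nt - 1) * (β k * x ^ k)) =
      (Real.exp x * Real.exp (-x)) *
        (β k * (x ^ ((Nt:ℝ) - (Nr:ℝ)) * x ^ k) / (1 + c * x) ^ (Nt - 1)) := by
    ring
  rw [hstep, hexp, hxk, one_mul]
  ring
end

section
/- Let α > 0 and let m ∈ ℤ be a fixed integer, and suppose F is a continuous strictly increasing c.d.f. with 1 - F(x) = α e^{-x} x^m (1+o(1)) as x→∞. Then, when m ≥ 0, the quantile satisfies F^{-1}(K/(K+1)) = ln K + m ln ln K + ln α + o(1) as K → ∞; in particular F^{-1}(K/(K+1)) - ln K - ln α = O(ln ln K). -/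
open Real Filter Asymptotics

theorem stmt17 (α : ℝ) (hα : 0 < α) (m : ℕ)
    (F : ℝ → ℝ) (hFcont : Continuous F) (hFmono : StrictMono F)
    (htail : Tendsto (fun x : ℝ => (1 - F x) / (α * Real.exp (-x) * x ^ m))
      atTop (nhds 1))
    (q : ℕ → ℝ) (hq : ∀ K : ℕ, 1 ≤ K → F (q K) = (K : ℝ) / (K + 1)) :
    Tendsto
        (fun K : ℕ => q K - Real.log K - (m : ℝ) * Real.log (Real.log K) - Real.log α)
        atTop (nhds 0) ∧
      (fun K : ℕ => q K - Real.log K - Real.log α)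
        =O[atTop] fun K : ℕ => Real.log (Real.log K) := by
  -- eventual form of hq
  have hq' : ∀ᶠ K : ℕ in atTop, 1 - F (q K) = 1 / ((K : ℝ) + 1) := by
    filter_upwards [eventually_ge_atTop 1] with K hK
    have hK1 : ((K : ℝ) + 1) ≠ 0 := by positivity
    rw [hq K hK]
    field_simp
    ring
  -- the denominator tends to 0
  have hd : Tendsto (fun x : ℝ => α * Real.exp (-x) * x ^ m) atTop (nhds 0) := by
    have h1 := (tendsto_pow_mul_exp_neg_atTop_nhds_zero m).const_mul α
    rw [mul_zero] at h1
    refine h1.congr fun x => by ring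
  -- F tends to 1 at infinity
  have hF1 : Tendsto F atTop (nhds 1) := by
    have h2 : Tendsto (fun x => 1 - F x) atTop (nhds 0) := by
      have h3 := htail.mul hd
      rw [one_mul] at h3
      refine h3.congr' ?_
      filter_upwards [eventually_gt_atTop (0 : ℝ)] with x hx
      have hne : α * Real.exp (-x) * x ^ m ≠ 0 := by positivity
      field_simp
    have h4 := h2.const_sub 1
    simpa [sub_sub_cancel] using h4
  -- F (q K) tends to 1
  have hFq : Tendsto (fun K : ℕ => F (q K)) atTop (nhds 1) := by
    have hrat : Tendsto (fun K : ℕ => (K : ℝ) / (K + 1)) atTop (nhds 1) := by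
      have h5 := (tendsto_one_div_add_atTop_nhds_zero_nat (𝕜 := ℝ)).const_sub 1
      rw [sub_zero] at h5
      refine h5.congr' ?_
      filter_upwards with K
      have : ((K : ℝ) + 1) ≠ 0 := by positivity
      field_simp
      ring
    refine hrat.congr' ?_
    filter_upwards [eventually_ge_atTop 1] with K hK
    exact (hq K hK).symm
  -- q tends to infinity
  have htop : Tendsto q atTop atTop := by
    rw [tendsto_atTop]
    intro b
    have hFb1 : F b < 1 :=
      lt_of_lt_of_le (hFmono (lt_add_one b)) (hFmono.monotone.ge_of_tendsto hF1 (b + 1))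
    filter_upwards [hFq.eventually (eventually_gt_nhds hFb1)] with K hK
    exact le_of_lt (hFmono.lt_iff_lt.mp hK)
  -- the ratio R
  obtain ⟨R, hRdef⟩ : ∃ R : ℕ → ℝ,
      R = fun K => (1 - F (q K)) / (α * Real.exp (-(q K)) * q K ^ m) := ⟨_, rfl⟩
  have hR : Tendsto R atTop (nhds 1) := by
    rw [hRdef]; exact htail.comp htop
  have hRpos : ∀ᶠ K : ℕ in atTop, 0 < R K :=
    hR.eventually (eventually_gt_nhds one_pos)
  have hqpos : ∀ᶠ K : ℕ in atTop, 0 < q K := htop.eventually_gt_atTop 0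
  -- main identity
  have hiden : ∀ᶠ K : ℕ in atTop,
      q K = Real.log ((K : ℝ) + 1) + (m : ℝ) * Real.log (q K)
        + Real.log α + Real.log (R K) := by
    filter_upwards [hq', hRpos, hqpos, eventually_ge_atTop 1] with K h1 h2 h3 h4
    have hden : (0 : ℝ) < α * Real.exp (-(q K)) * q K ^ m := by positivity
    have hprod : R K * (α * Real.exp (-(q K)) * q K ^ m) = 1 / ((K : ℝ) + 1) := by
      rw [hRdef]
      rw [div_mul_cancel₀ _ hden.ne']
      exact h1
    have hK1 : (0 : ℝ) < (K : ℝ) + 1 := by positivity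
    have key := congrArg Real.log hprod
    rw [Real.log_mul h2.ne' hden.ne', Real.log_mul (by positivity) (by positivity),
      Real.log_mul hα.ne' (Real.exp_pos _).ne', Real.log_exp, Real.log_pow, one_div,
      Real.log_inv] at key
    push_cast at key ⊢
    linarith
  -- basic limits
  have hlogK : Tendsto (fun K : ℕ => Real.log K) atTop atTop :=
    Real.tendsto_log_atTop.comp tendsto_natCast_atTop_atTop
  have hlogKpos : ∀ᶠ K : ℕ in atTop, 0 < Real.log K := hlogK.eventually_gt_atTop 0
  have hinvlog : Tendsto (fun K : ℕ => 1 / Real.log K) atTop (nhds 0) := by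
    simpa [one_div, Function.comp_def] using tendsto_inv_atTop_zero.comp hlogK
  have ha : Tendsto (fun K : ℕ => Real.log ((K : ℝ) + 1) - Real.log K) atTop (nhds 0) := by
    have h1 : Tendsto (fun K : ℕ => ((K : ℝ) + 1) / K) atTop (nhds 1) := by
      have h2 := (tendsto_one_div_atTop_nhds_zero_nat (𝕜 := ℝ)).const_add 1
      rw [add_zero] at h2
      refine h2.congr' ?_
      filter_upwards [eventually_ge_atTop 1] with K hK
      have : (K : ℝ) ≠ 0 := by positivity
      field_simp
    have h3 := h1.log one_ne_zero
    rw [Real.log_one] at h3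
    refine h3.congr' ?_
    filter_upwards [eventually_ge_atTop 1] with K hK
    have hK0 : (0 : ℝ) < (K : ℝ) := by positivity
    rw [Real.log_div (by positivity) hK0.ne']
  have hb : Tendsto (fun K => Real.log (R K)) atTop (nhds 0) := by
    have := hR.log one_ne_zero
    rwa [Real.log_one] at this
  have hu : Tendsto (fun K : ℕ => Real.log (q K) / q K) atTop (nhds 0) :=
    Real.isLittleO_log_id_atTop.tendsto_div_nhds_zero.comp htop
  -- (q K - m log q K) / log K → 1
  have hL : Tendsto (fun K : ℕ => (q K - (m : ℝ) * Real.log (q K)) / Real.log K)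
      atTop (nhds 1) := by
    have h1 := (((ha.add (tendsto_const_nhds (x := Real.log α))).add hb).mul hinvlog).add
      (tendsto_const_nhds (x := (1 : ℝ)))
    norm_num at h1
    refine h1.congr' ?_
    filter_upwards [hiden, hlogKpos] with K h hlg
    have hnum : Real.log ((K : ℝ) + 1) - Real.log K + Real.log α + Real.log (R K)
        + Real.log K = q K - (m : ℝ) * Real.log (q K) := by linarith
    rw [← hnum]
    field_simp
  -- q K / log K → 1
  set v : ℕ → ℝ := fun K => 1 - (m : ℝ) * (Real.log (q K) / q K) with hvdef
  have hv : Tendsto v atTop (nhds 1) := by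
    have h1 := (hu.const_mul (m : ℝ)).const_sub 1
    rw [mul_zero, sub_zero] at h1
    exact h1
  have hvpos : ∀ᶠ K : ℕ in atTop, 0 < v K := hv.eventually (eventually_gt_nhds one_pos)
  have ht : Tendsto (fun K : ℕ => q K / Real.log K) atTop (nhds 1) := by
    have h1 := hL.div hv one_ne_zero
    rw [div_one] at h1
    refine h1.congr' ?_
    filter_upwards [hqpos, hvpos, hlogKpos] with K hq0 hv0 hlg
    simp only [Pi.div_apply]
    have hw : q K - (m : ℝ) * Real.log (q K) = q K * v K := by
      rw [hvdef]
      field_simp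
    rw [hw, mul_div_right_comm, mul_div_cancel_right₀ _ hv0.ne']
  -- log q K - log log K → 0
  have hc : Tendsto (fun K : ℕ => Real.log (q K) - Real.log (Real.log K)) atTop (nhds 0) := by
    have h1 := ht.log one_ne_zero
    rw [Real.log_one] at h1
    refine h1.congr' ?_
    filter_upwards [hqpos, hlogKpos] with K hq0 hlg
    rw [Real.log_div hq0.ne' hlg.ne']
  -- first goal
  have hmain : Tendsto
      (fun K : ℕ => q K - Real.log K - (m : ℝ) * Real.log (Real.log K) - Real.log α)
      atTop (nhds 0) := by
    have h1 := (ha.add (hc.const_mul (m : ℝ))).add hb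
    rw [mul_zero, add_zero, add_zero] at h1
    refine h1.congr' ?_
    filter_upwards [hiden] with K h
    linear_combination -h
  refine ⟨hmain, ?_⟩
  -- second goal
  have hloglog : Tendsto (fun K : ℕ => Real.log (Real.log K)) atTop atTop :=
    Real.tendsto_log_atTop.comp hlogK
  have hO1 : (fun K : ℕ => q K - Real.log K - (m : ℝ) * Real.log (Real.log K) - Real.log α)
      =O[atTop] (fun _ : ℕ => (1 : ℝ)) := hmain.isBigO_one ℝ
  have h1O : (fun _ : ℕ => (1 : ℝ)) =O[atTop] fun K : ℕ => Real.log (Real.log K) := by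
    rw [isBigO_iff]
    refine ⟨1, ?_⟩
    filter_upwards [hloglog.eventually_ge_atTop 1] with K hK
    simpa using le_trans hK (le_abs_self _)
  have hOsum : (fun K : ℕ => (q K - Real.log K - (m : ℝ) * Real.log (Real.log K) - Real.log α)
      + (m : ℝ) * Real.log (Real.log K)) =O[atTop] fun K : ℕ => Real.log (Real.log K) :=
    (hO1.trans h1O).add ((isBigO_refl (fun K : ℕ => Real.log (Real.log K)) atTop).const_mul_left
      (m : ℝ))
  refine hOsum.congr' ?_ (EventuallyEq.rfl)
  filter_upwards with K
  ring
end

section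
/- Scaling law: suppose a c.d.f. F on (0,∞) satisfies 1 - F(x) = α e^{-x} x^{N_r - N_t}(1+o(1)) as x → ∞ with α > 0 and N_r ≥ N_t. Then as K → ∞, N_t log₂(1 + (ρ/N_t) F^{-1}(K/(K+1))) = N_t log₂ ln K + N_t log₂ ρ - N_t log₂ N_t + O(ln ln K / ln K). -/
/-!
Write `m = N_r - N_t`. Taking logarithms in the tail hypothesis gives
`-log (1 - F x) = x - m log x - log α + o(1)`, and `1 - F (q K) = 1 / (K + 1)`, so
`q K - m log (q K) = log K + O(1)`. Hence `q K ~ log K`, so `log (q K) = O(log log K)` and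
`q K = log K + O(log log K)`. The quantity to estimate is exactly
`(N_t / ln 2) · log ((N_t / ρ + q K) / log K)`, the logarithm of `1 + O(log log K / log K)`.
-/

open Real Filter Asymptotics Topology

lemma eventually_pos_of_tendsto_div_one {ι : Type*} {l : Filter ι} {S D : ι → ℝ}
    (h : Tendsto (fun x => S x / D x) l (𝓝 1)) (hD : ∀ᶠ x in l, 0 < D x) :
    ∀ᶠ x in l, 0 < S x := by
  filter_upwards [h.eventually (lt_mem_nhds one_pos), hD] with x hSD hDx
  exact (div_pos_iff_of_pos_right hDx).mp hSD

lemma tendsto_log_add_sub_log_of_tendsto_div_exp {α : ℝ} (hα : 0 < α) (m : ℕ) {S : ℝ → ℝ}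
    (h : Tendsto (fun x => S x / (α * exp (-x) * x ^ m)) atTop (𝓝 1)) :
    Tendsto (fun x => log (S x) + x - m * log x) atTop (𝓝 (log α)) := by
  have hlog := (h.log one_ne_zero).const_add (log α)
  rw [log_one, add_zero] at hlog
  refine hlog.congr' ?_
  filter_upwards [h.eventually_ne one_ne_zero, eventually_gt_atTop 0] with x hSD hx
  have hD : α * exp (-x) * x ^ m ≠ 0 := by positivity
  have hS : S x ≠ 0 := fun hS => by simp [hS] at hSD
  rw [log_div hS hD, log_mul (by positivity) (by positivity), log_mul hα.ne' (exp_ne_zero _),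
    log_exp, log_pow]
  ring

lemma Monotone.forall_lt_of_eventually_lt {α β : Type*} [SemilatticeSup α] [Nonempty α]
    [Preorder β] {F : α → β} (hF : Monotone F) {c : β} (h : ∀ᶠ x in atTop, F x < c) (x : α) :
    F x < c := by
  obtain ⟨y, hyc, hxy⟩ := (h.and (eventually_ge_atTop x)).exists
  exact (hF hxy).trans_lt hyc

lemma Monotone.tendsto_atTop_of_tendsto_nhds {ι α β : Type*} [LinearOrder α] [LinearOrder β]
    [TopologicalSpace β] [OrderTopology β] {l : Filter ι} {F : α → β} (hF : Monotone F) {c : β}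
    (hlt : ∀ x, F x < c) {q : ι → α} (hq : Tendsto (fun k => F (q k)) l (𝓝 c)) :
    Tendsto q l atTop := by
  refine tendsto_atTop.2 fun M => ?_
  filter_upwards [hq.eventually (eventually_gt_nhds (hlt M))] with k hk
  exact (hF.reflect_lt hk).le

lemma sub_isBigO_log_of_sub_mul_log_sub_isBigO_one {ι : Type*} {l : Filter ι} {q y : ι → ℝ}
    {m : ℝ} (hq : Tendsto q l atTop) (hy : Tendsto y l atTop)
    (h : (fun k => q k - m * log (q k) - y k) =O[l] fun _ => (1 : ℝ)) :
    (fun k => q k - y k) =O[l] fun k => log (y k) := by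
  have hone_q : (fun _ => (1 : ℝ)) =o[l] q :=
    (isLittleO_one_left_iff ℝ).2 (tendsto_norm_atTop_atTop.comp hq)
  have hlog_q : (fun k => log (q k)) =o[l] q := isLittleO_log_id_atTop.comp_tendsto hq
  have hequiv : q ~[l] y := by
    refine IsEquivalent.symm (IsLittleO.isEquivalent ?_)
    have hsplit : y - q = fun k => -(m * log (q k)) - (q k - m * log (q k) - y k) := by
      ext k; simp only [Pi.sub_apply]; ring
    rw [hsplit]
    exact (hlog_q.const_mul_left m).neg_left.sub (h.trans_isLittleO hone_q)
  have hone_log_y : (fun _ => (1 : ℝ)) =O[l] fun k => log (y k) :=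
    ((isLittleO_one_left_iff ℝ).2
      (tendsto_norm_atTop_atTop.comp (tendsto_log_atTop.comp hy))).isBigO
  calc (fun k => q k - y k) = fun k => m * log (q k) + (q k - m * log (q k) - y k) := by
        ext k; ring
    _ =O[l] fun k => log (y k) :=
        ((hequiv.log hy).isBigO.const_mul_left m).add (h.trans hone_log_y)

lemma log_isBigO_of_sub_one_isBigO {ι : Type*} {l : Filter ι} {w g : ι → ℝ}
    (hw : (fun k => w k - 1) =O[l] g) (hg : Tendsto g l (𝓝 0)) :
    (fun k => log (w k)) =O[l] g := by
  have hw1 : Tendsto w l (𝓝 1) := by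
    simpa using (hw.trans_tendsto hg).add_const 1
  have hlog : (fun x => log x) =O[𝓝 1] fun x => x - 1 := by
    simpa using (hasDerivAt_log one_ne_zero).isBigO_sub
  exact (hlog.comp_tendsto hw1).trans hw

lemma tendsto_atTop_of_eq_natCast_div_add_one {F : ℝ → ℝ} (hF : Monotone F)
    (hF_lt : ∀ᶠ x in atTop, F x < 1) {q : ℕ → ℝ}
    (hq : ∀ K : ℕ, 1 ≤ K → F (q K) = (K : ℝ) / (K + 1)) : Tendsto q atTop atTop := by
  refine hF.tendsto_atTop_of_tendsto_nhds (hF.forall_lt_of_eventually_lt hF_lt) ?_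
  refine (tendsto_natCast_div_add_atTop (1 : ℝ)).congr' ?_
  filter_upwards [eventually_ge_atTop 1] with K hK
  rw [hq K hK]

lemma div_sub_one_isBigO_log_div {ι : Type*} {l : Filter ι} {q y : ι → ℝ} (c : ℝ)
    (hy : Tendsto y l atTop) (h : (fun k => q k - y k) =O[l] fun k => log (y k)) :
    (fun k => (c + q k) / y k - 1) =O[l] fun k => log (y k) / y k := by
  have hc : (fun _ => c) =O[l] fun k => log (y k) :=
    (isLittleO_const_left.2 (Or.inr
      (tendsto_norm_atTop_atTop.comp (tendsto_log_atTop.comp hy)))).isBigO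
  refine ((hc.add h).mul (isBigO_refl (fun k => (y k)⁻¹) l)).congr' ?_ ?_
  · filter_upwards [hy.eventually_ne_atTop 0] with k hk
    field_simp
    ring
  · exact EventuallyEq.of_eq (funext fun k => (div_eq_mul_inv _ _).symm)

lemma mul_logb_one_add_div_mul_sub_eq {N ρ q L : ℝ} (hN : N ≠ 0) (hρ : ρ ≠ 0)
    (hq : N / ρ + q ≠ 0) (hL : L ≠ 0) :
    N * logb 2 (1 + ρ / N * q) - (N * logb 2 L + N * logb 2 ρ - N * logb 2 N) =
      N / log 2 * log ((N / ρ + q) / L) := by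
  have hsplit : 1 + ρ / N * q = ρ / N * (N / ρ + q) := by field_simp
  simp only [logb]
  rw [hsplit, log_mul (div_ne_zero hρ hN) hq, log_div hρ hN, log_div hq hL]
  ring

theorem stmt18_general (Nr Nt : ℕ) (hNt : 1 ≤ Nt) (ρ : ℝ) (hρ : 0 < ρ)
    (α : ℝ) (hα : 0 < α)
    (F : ℝ → ℝ) (hFmono : StrictMono F)
    (htail : Tendsto (fun x : ℝ => (1 - F x) / (α * Real.exp (-x) * x ^ (Nr - Nt)))
      atTop (nhds 1))
    (q : ℕ → ℝ) (hq : ∀ K : ℕ, 1 ≤ K → F (q K) = (K : ℝ) / (K + 1)) :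
    (fun K : ℕ => (Nt : ℝ) * Real.logb 2 (1 + ρ / Nt * q K) -
        ((Nt : ℝ) * Real.logb 2 (Real.log K) + Nt * Real.logb 2 ρ -
          Nt * Real.logb 2 Nt))
      =O[atTop] fun K : ℕ => Real.log (Real.log K) / Real.log K := by
  have hq_top : Tendsto q atTop atTop := by
    refine tendsto_atTop_of_eq_natCast_div_add_one hFmono.monotone ?_ hq
    have hD : ∀ᶠ x : ℝ in atTop, 0 < α * exp (-x) * x ^ (Nr - Nt) := by
      filter_upwards [eventually_gt_atTop 0] with x hx
      positivity
    filter_upwards [eventually_pos_of_tendsto_div_one htail hD] with x hx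
    linarith
  have hlogK : Tendsto (fun K : ℕ => log K) atTop atTop :=
    tendsto_log_atTop.comp tendsto_natCast_atTop_atTop
  have hres : (fun K => q K - (Nr - Nt : ℕ) * log (q K) - log K) =O[atTop]
      fun _ => (1 : ℝ) := by
    have h := ((tendsto_log_add_sub_log_of_tendsto_div_exp hα _ htail).comp hq_top).add
      tendsto_log_nat_add_one_sub_log
    refine (h.isBigO_one ℝ).congr' ?_ EventuallyEq.rfl
    filter_upwards [eventually_ge_atTop 1] with K hK
    have hsurv : 1 - F (q K) = ((K : ℝ) + 1)⁻¹ := by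
      rw [hq K hK]; field_simp; ring
    simp only [Function.comp_apply, hsurv, log_inv]
    ring
  have hw := div_sub_one_isBigO_log_div (Nt / ρ) hlogK
    (sub_isBigO_log_of_sub_mul_log_sub_isBigO_one hq_top hlogK hres)
  have hLL : Tendsto (fun K : ℕ => log (log K) / log K) atTop (𝓝 0) :=
    isLittleO_log_id_atTop.tendsto_div_nhds_zero.comp hlogK
  refine ((log_isBigO_of_sub_one_isBigO hw hLL).const_mul_left (Nt / log 2)).congr' ?_
    EventuallyEq.rfl
  filter_upwards [hq_top.eventually_ge_atTop 0, hlogK.eventually_gt_atTop 0] with K hqK hK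
  have hNt0 : (0 : ℝ) < Nt := by exact_mod_cast hNt
  exact (mul_logb_one_add_div_mul_sub_eq hNt0.ne' hρ.ne' (by positivity) hK.ne').symm

theorem stmt18 (Nr Nt : ℕ) (hNt : 1 ≤ Nt) (hNr : Nt ≤ Nr) (ρ : ℝ) (hρ : 0 < ρ)
    (α : ℝ) (hα : 0 < α)
    (F : ℝ → ℝ) (hFcont : Continuous F) (hFmono : StrictMono F)
    (htail : Tendsto (fun x : ℝ => (1 - F x) / (α * Real.exp (-x) * x ^ (Nr - Nt)))
      atTop (nhds 1))
    (q : ℕ → ℝ) (hq : ∀ K : ℕ, 1 ≤ K → F (q K) = (K : ℝ) / (K + 1)) :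
    (fun K : ℕ => (Nt : ℝ) * Real.logb 2 (1 + ρ / Nt * q K) -
        ((Nt : ℝ) * Real.logb 2 (Real.log K) + Nt * Real.logb 2 ρ -
          Nt * Real.logb 2 Nt))
      =O[atTop] fun K : ℕ => Real.log (Real.log K) / Real.log K :=
  stmt18_general Nr Nt hNt ρ hρ α hα F hFmono htail q hq
end

section
/- For integers N_r ≥ N_t ≥ 2 and ρ > 0: (N_t/ρ)^{N_t-1}/(N_r-1)! > 1/(N_r-N_t)! if and only if ρ < N_t·((N_r-N_t)!/(N_r-1)!)^{1/(N_t-1)}; i.e., α_MRC > α_ZF exactly when ρ is below the stated crossover SNR, and the crossover threshold N_t((N_r-N_t)!/(N_r-1)!)^{1/(N_t-1)} is a strictly decreasing function of N_r for fixed N_t. -/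
open Real Nat

lemma lt_div_pow_iff_lt_mul_rpow {a ρ q : ℝ} (ha : 0 < a) (hρ : 0 < ρ) (hq : 0 < q) {n : ℕ}
    (hn : n ≠ 0) : q < (a / ρ) ^ n ↔ ρ < a * q⁻¹ ^ (1 / (n : ℝ)) := by
  have hn' : (0 : ℝ) < n := by positivity
  rw [← rpow_natCast, ← rpow_inv_lt_iff_of_pos hq.le (by positivity) hn', lt_div_iff₀ hρ,
    ← lt_div_iff₀' (by positivity), div_eq_mul_inv, ← inv_rpow hq.le, one_div]

lemma factorial_sub_div_factorial_sub_one_strictAntiOn {t : ℕ} (ht : 2 ≤ t) :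
    StrictAntiOn (fun r : ℕ ↦ ((r - t)! : ℝ) / (r - 1)!) (Set.Ici t) := by
  refine strictAntiOn_Ici_of_lt_pred fun m hm ↦ ?_
  obtain ⟨r, rfl⟩ : ∃ r, m = r + 1 := ⟨m - 1, by omega⟩
  have hsucc : r + 1 - t = (r - t) + 1 := by omega
  simp only [Order.pred_eq_sub_one, add_tsub_cancel_right]
  rw [hsucc, factorial_succ, ← mul_factorial_pred (by omega : r ≠ 0)]
  have hr : (0 : ℝ) < r := by exact_mod_cast (show 0 < r by omega)
  -- one step multiplies the ratio by `(r + 1 - t) / r < 1`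
  have hstep : ((r - t : ℕ) : ℝ) + 1 < r := by exact_mod_cast (show r - t + 1 < r by omega)
  have hpos : (0 : ℝ) < (r - t)! * (r - 1)! := by positivity
  push_cast
  rw [div_lt_div_iff₀ (by positivity) (by positivity)]
  nlinarith

/-- The crossover SNR below which `α_MRC > α_ZF`. -/
noncomputable def crossoverSNR (Nt Nr : ℕ) : ℝ :=
  Nt * (((Nr - Nt)! : ℝ) / (Nr - 1)!) ^ ((1 : ℝ) / ((Nt : ℝ) - 1))

lemma lt_crossoverSNR_iff {Nt : ℕ} (hNt : 2 ≤ Nt) (Nr : ℕ) {ρ : ℝ} (hρ : 0 < ρ) :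
    1 / ((Nr - Nt)! : ℝ) < ((Nt : ℝ) / ρ) ^ (Nt - 1) / (Nr - 1)! ↔ ρ < crossoverSNR Nt Nr := by
  have hcast : ((Nt - 1 : ℕ) : ℝ) = Nt - 1 := by rw [cast_sub (by omega), cast_one]
  rw [div_lt_div_iff₀ (by positivity) (by positivity), one_mul, ← div_lt_iff₀ (by positivity),
    lt_div_pow_iff_lt_mul_rpow (by positivity) hρ (by positivity) (by omega), inv_div, hcast,
    crossoverSNR]

lemma crossoverSNR_strictAntiOn {Nt : ℕ} (hNt : 2 ≤ Nt) :
    StrictAntiOn (crossoverSNR Nt) (Set.Ici Nt) := by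
  have hexp : (0 : ℝ) < 1 / ((Nt : ℝ) - 1) :=
    one_div_pos.2 (sub_pos.2 (by exact_mod_cast (show 1 < Nt by omega)))
  intro _ hr _ hr' hlt
  exact mul_lt_mul_of_pos_left (rpow_lt_rpow (by positivity)
    (factorial_sub_div_factorial_sub_one_strictAntiOn hNt hr hr' hlt) hexp)
    (by exact_mod_cast (show 0 < Nt by omega))

theorem stmt19 (Nt : ℕ) (hNt : 2 ≤ Nt) :
    (∀ Nr : ℕ, Nt ≤ Nr → ∀ ρ : ℝ, 0 < ρ →
      (((Nt : ℝ) / ρ) ^ (Nt - 1) / (Nat.factorial (Nr - 1)) >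
          1 / (Nat.factorial (Nr - Nt)) ↔
        ρ < (Nt : ℝ) *
          ((Nat.factorial (Nr - Nt) : ℝ) / (Nat.factorial (Nr - 1))) ^
            ((1 : ℝ) / ((Nt : ℝ) - 1)))) ∧
    (∀ Nr Nr' : ℕ, Nt ≤ Nr → Nr < Nr' →
      (Nt : ℝ) *
          ((Nat.factorial (Nr' - Nt) : ℝ) / (Nat.factorial (Nr' - 1))) ^
            ((1 : ℝ) / ((Nt : ℝ) - 1)) <
        (Nt : ℝ) *
          ((Nat.factorial (Nr - Nt) : ℝ) / (Nat.factorial (Nr - 1))) ^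
            ((1 : ℝ) / ((Nt : ℝ) - 1))) :=
  ⟨fun Nr _ _ hρ ↦ lt_crossoverSNR_iff hNt Nr hρ,
    fun _ _ hNr hlt ↦ crossoverSNR_strictAntiOn hNt hNr (Set.mem_Ici.2 (hNr.trans hlt.le)) hlt⟩
end
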